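/- arXiv:1805.05406 — 8 statements merged into one kernel-verified Lean document; each statement's English description precedes it below -/
import Mathlib

section
/- Any quasi-Clifford algebraic curvature tensor is Osserman. That is, if R = μ₀R⁰ + Σ_{i=1}^m μᵢR^{Jᵢ} on a scalar product space (V,g) with a quasi-Clifford family J₁,…,J_m, then the characteristic polynomial of the Jacobi operator 𝒥_X is the same for all unit timelike X, and the same for all unit spacelike X. -/
/-! The Jacobi operator is `𝒥_X = μ₀ ε_X - A_X ∘ B_X`, where `A_X : ℝ^{1+m} → V` sends the
coordinate vectors to `X, J₁ X, …, J_m X` and `B_X` takes weighted inner products with these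
vectors. By skew-adjointness and the Hurwitz relations they are pairwise orthogonal with
`g(X, X) = ε_X` and `g(Jᵢ X, Jᵢ X) = -cᵢ ε_X`, so `B_X ∘ A_X` depends only on `ε_X`. Since the
characteristic polynomial of `A ∘ B` is determined by `B ∘ A` (Sylvester), so is that of `𝒥_X`. -/

open Module Finset

/-- The algebraic curvature tensor `R⁰` of constant sectional curvature one. -/
def R0 {V : Type*} [AddCommGroup V] [Module ℝ V] (g : LinearMap.BilinForm ℝ V)
    (X Y Z W : V) : ℝ :=
  g Y Z * g X W - g X Z * g Y W

/-- The algebraic curvature tensor `R^J` generated by a `g`-skew-adjoint endomorphism `J`. -/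
def RJ {V : Type*} [AddCommGroup V] [Module ℝ V] (g : LinearMap.BilinForm ℝ V)
    (J : V →ₗ[ℝ] V) (X Y Z W : V) : ℝ :=
  g (J X) Z * g (J Y) W - g (J Y) Z * g (J X) W + 2 * g (J X) Y * g (J Z) W

namespace LinearMap

open Polynomial

variable {R M N : Type*} [CommRing R] [Nontrivial R]
  [AddCommGroup M] [Module R M] [Module.Free R M] [Module.Finite R M]
  [AddCommGroup N] [Module R N] [Module.Free R N] [Module.Finite R N]

theorem X_pow_mul_charpoly_comp_comm (A : N →ₗ[R] M) (B : M →ₗ[R] N) :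
    X ^ finrank R N * (A ∘ₗ B).charpoly = X ^ finrank R M * (B ∘ₗ A).charpoly := by
  classical
  let bM := Module.Free.chooseBasis R M
  let bN := Module.Free.chooseBasis R N
  rw [← charpoly_toMatrix _ bM, ← charpoly_toMatrix _ bN, toMatrix_comp bM bN bM,
    toMatrix_comp bN bM bN, finrank_eq_card_chooseBasisIndex,
    finrank_eq_card_chooseBasisIndex]
  exact Matrix.charpoly_mul_comm' _ _

theorem charpoly_comp_eq_of_comp_eq {A A' : N →ₗ[R] M} {B B' : M →ₗ[R] N}
    (h : B ∘ₗ A = B' ∘ₗ A') : (A ∘ₗ B).charpoly = (A' ∘ₗ B').charpoly := by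
  refine (isRegular_X_pow (finrank R N)).left.eq_iff.mp ?_
  rw [X_pow_mul_charpoly_comp_comm A B, X_pow_mul_charpoly_comp_comm A' B', h]

end LinearMap

namespace LinearMap.BilinForm

variable {R M ι : Type*} [CommRing R] [AddCommGroup M] [Module R M] [Fintype ι]

theorem sum_smul_smulRight_eq_comp (B : LinearMap.BilinForm R M) (a : ι → R) (w : ι → M) :
    ∑ j, a j • (B (w j)).smulRight (w j)
      = Fintype.linearCombination R w ∘ₗ LinearMap.pi (fun j => a j • B (w j)) := by
  ext x
  simp [Fintype.linearCombination_apply, mul_smul]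

variable [Nontrivial R] [Module.Free R M] [Module.Finite R M]

theorem charpoly_sum_smul_smulRight_eq_of_gram_eq (B : LinearMap.BilinForm R M) (a : ι → R)
    {w w' : ι → M} (h : ∀ j k, B (w j) (w k) = B (w' j) (w' k)) :
    (∑ j, a j • (B (w j)).smulRight (w j)).charpoly
      = (∑ j, a j • (B (w' j)).smulRight (w' j)).charpoly := by
  rw [sum_smul_smulRight_eq_comp, sum_smul_smulRight_eq_comp]
  refine charpoly_comp_eq_of_comp_eq ?_
  ext x j
  simp [Fintype.linearCombination_apply, h]

theorem charpoly_smul_one_sub_sum_smul_smulRight_eq_of_gram_eq (B : LinearMap.BilinForm R M)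
    (r : R) (a : ι → R) {w w' : ι → M} (h : ∀ j k, B (w j) (w k) = B (w' j) (w' k)) :
    (r • (1 : End R M) - ∑ j, a j • (B (w j)).smulRight (w j)).charpoly
      = (r • (1 : End R M) - ∑ j, a j • (B (w' j)).smulRight (w' j)).charpoly := by
  have shift : ∀ v : ι → M, r • (1 : End R M) - ∑ j, a j • (B (v j)).smulRight (v j)
      = ∑ j, (-a j) • (B (v j)).smulRight (v j) - (-r) • 1 := by
    intro v
    simp only [neg_smul, Finset.sum_neg_distrib, sub_neg_eq_add, neg_add_eq_sub]
  rw [shift, shift, charpoly_sub_smul, charpoly_sub_smul,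
    charpoly_sum_smul_smulRight_eq_of_gram_eq B _ h]

end LinearMap.BilinForm

section QuasiClifford

variable {V : Type*} [AddCommGroup V] [Module ℝ V] {g : LinearMap.BilinForm ℝ V}

theorem apply_self_eq_zero_of_skew (hsymm : ∀ x y, g x y = g y x) {J : V →ₗ[ℝ] V}
    (hskew : ∀ x y, g (J x) y = - g x (J y)) (x : V) : g (J x) x = 0 := by
  linarith [hskew x x, hsymm x (J x)]

theorem RJ_apply_self_self_of_skew (hsymm : ∀ x y, g x y = g y x) {J : V →ₗ[ℝ] V}
    (hskew : ∀ x y, g (J x) y = - g x (J y)) (x y z : V) :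
    RJ g J y x x z = -(3 * (g (J x) y * g (J x) z)) := by
  rw [RJ, apply_self_eq_zero_of_skew hsymm hskew, hskew y x, hsymm y]
  ring

variable {m : ℕ} {J : Fin m → V →ₗ[ℝ] V}

theorem apply_apply_eq_of_quasiClifford (hsymm : ∀ x y, g x y = g y x)
    (hskew : ∀ i, ∀ x y : V, g (J i x) y = - g x (J i y)) {c : Fin m → ℝ}
    (hhur : ∀ i j, J i ∘ₗ J j + J j ∘ₗ J i
      = ((if i = j then 2 * c i else 0 : ℝ) • LinearMap.id : V →ₗ[ℝ] V)) (i j : Fin m) (x : V) :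
    g (J i x) (J j x) = (if i = j then -c i else 0) * g x x := by
  have hc := congrArg (fun f : V →ₗ[ℝ] V => g x (f x)) (hhur i j)
  simp only [LinearMap.add_apply, LinearMap.comp_apply, map_add, LinearMap.smul_apply,
    LinearMap.id_apply, map_smul, smul_eq_mul] at hc
  have hij := hskew i x (J j x)
  have hji := hskew j x (J i x)
  have hsymm' := hsymm (J i x) (J j x)
  split_ifs at hc ⊢ <;> linear_combination (hij + hji + hsymm' - hc) / 2

variable (J) in
/-- The vectors `X, J₁ X, …, J_m X`, indexed by `none, some 1, …, some m`. -/
def cliffordFrame (x : V) : Option (Fin m) → V := fun o => o.elim x (J · x)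

theorem apply_cliffordFrame_cliffordFrame (hsymm : ∀ x y, g x y = g y x)
    (hskew : ∀ i, ∀ x y : V, g (J i x) y = - g x (J i y)) {c : Fin m → ℝ}
    (hhur : ∀ i j, J i ∘ₗ J j + J j ∘ₗ J i
      = ((if i = j then 2 * c i else 0 : ℝ) • LinearMap.id : V →ₗ[ℝ] V)) (x : V)
    (j k : Option (Fin m)) :
    g (cliffordFrame J x j) (cliffordFrame J x k)
      = (if j = k then j.elim 1 (-c ·) else 0) * g x x := by
  rcases j with _ | i <;> rcases k with _ | i'
  · simp [cliffordFrame]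
  · simp [cliffordFrame, hsymm x, apply_self_eq_zero_of_skew hsymm (hskew i')]
  · simp [cliffordFrame, apply_self_eq_zero_of_skew hsymm (hskew i)]
  · simp [cliffordFrame, apply_apply_eq_of_quasiClifford hsymm hskew hhur]

theorem jacobi_eq_smul_one_sub_sum (hsymm : ∀ x y, g x y = g y x) (hnd : g.SeparatingLeft)
    (hskew : ∀ i, ∀ x y : V, g (J i x) y = - g x (J i y)) (μ₀ : ℝ) (μ : Fin m → ℝ)
    {R : V → V → V → V → ℝ}
    (hR : ∀ X Y Z W, R X Y Z W = μ₀ * R0 g X Y Z W + ∑ i, μ i * RJ g (J i) X Y Z W)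
    {Jac : V → V →ₗ[ℝ] V} (hJac : ∀ X Y Z, g (Jac X Y) Z = R Y X X Z) (x : V) :
    Jac x = (μ₀ * g x x) • 1 - ∑ j, (j.elim μ₀ (3 * μ ·)) •
      (g (cliffordFrame J x j)).smulRight (cliffordFrame J x j) := by
  ext y
  refine sub_eq_zero.mp (hnd _ fun z => ?_)
  simp only [map_sub, LinearMap.sub_apply, hJac, hR, R0, hsymm y x,
    RJ_apply_self_self_of_skew hsymm (hskew _), Fintype.sum_option, cliffordFrame,
    Option.elim_none, Option.elim_some, LinearMap.smul_apply, End.one_apply, LinearMap.coe_sum,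
    Finset.sum_apply, LinearMap.smulRight_apply, map_smul, map_add, map_sum, LinearMap.add_apply,
    smul_eq_mul, mul_neg, Finset.sum_neg_distrib]
  ring_nf

end QuasiClifford

/-- any quasi-Clifford algebraic curvature tensor is Osserman: the
characteristic polynomial of the Jacobi operator is independent of the unit timelike
(resp. unit spacelike) vector. -/
theorem quasiClifford_osserman
    {V : Type*} [AddCommGroup V] [Module ℝ V] [FiniteDimensional ℝ V]
    (g : LinearMap.BilinForm ℝ V) (hsymm : ∀ x y, g x y = g y x) (hnd : g.Nondegenerate)
    {m : ℕ} (μ₀ : ℝ) (μ c : Fin m → ℝ) (J : Fin m → V →ₗ[ℝ] V)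
    (hskew : ∀ i, ∀ x y : V, g (J i x) y = - g x (J i y))
    (hhur : ∀ i j, J i ∘ₗ J j + J j ∘ₗ J i
      = ((if i = j then 2 * c i else 0 : ℝ) • LinearMap.id : V →ₗ[ℝ] V))
    (R : V → V → V → V → ℝ)
    (hR : ∀ X Y Z W, R X Y Z W = μ₀ * R0 g X Y Z W + ∑ i, μ i * RJ g (J i) X Y Z W)
    (Jac : V → V →ₗ[ℝ] V)
    (hJac : ∀ X Y Z, g (Jac X Y) Z = R Y X X Z) :
    (∀ X X' : V, g X X = -1 → g X' X' = -1 → (Jac X).charpoly = (Jac X').charpoly) ∧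
    (∀ X X' : V, g X X = 1 → g X' X' = 1 → (Jac X).charpoly = (Jac X').charpoly) := by
  have charpoly_eq : ∀ X X' : V, g X X = g X' X' → (Jac X).charpoly = (Jac X').charpoly := by
    intro X X' h
    rw [jacobi_eq_smul_one_sub_sum hsymm hnd.1 hskew μ₀ μ hR hJac,
      jacobi_eq_smul_one_sub_sum hsymm hnd.1 hskew μ₀ μ hR hJac, h]
    refine g.charpoly_smul_one_sub_sum_smul_smulRight_eq_of_gram_eq _ _ fun j k => ?_
    rw [apply_cliffordFrame_cliffordFrame hsymm hskew hhur,
      apply_cliffordFrame_cliffordFrame hsymm hskew hhur, h]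
  exact ⟨fun X X' hX hX' => charpoly_eq X X' (hX.trans hX'.symm),
    fun X X' hX hX' => charpoly_eq X X' (hX.trans hX'.symm)⟩
end

section
/- Let R = μ₀R⁰ + Σ_{i=1}^m μᵢR^{Jᵢ} be a quasi-Clifford algebraic curvature tensor on a scalar product space (V,g), with Hurwitz-like constants c₁,…,c_m. Then for every X ∈ V and every 1 ≤ i ≤ m one has 𝒥_X(JᵢX) = ε_X(μ₀ + 3cᵢμᵢ)·JᵢX, and 𝒥_X(Z) = ε_X·μ₀·Z for every Z ∈ V orthogonal to each of X, J₁X, …, J_mX. -/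
open Module Finset

/-!
The curvature identities reduce the Jacobi operator to the closed form
`𝒥_X Y = μ₀ (ε_X Y - g(Y,X) X) - 3 Σᵢ μᵢ g(Y, JᵢX) JᵢX`. The Hurwitz relations make the vectors
`JᵢX` pairwise orthogonal with `g(JᵢX, JᵢX) = -cᵢ ε_X`, so on `JₖX` only the `k`-th term of the sum
survives, while on `Z ⊥ X, J₁X, …, J_mX` the whole correction vanishes.
-/

namespace QuasiClifford

variable {V : Type*} [AddCommGroup V] [Module ℝ V] {g : LinearMap.BilinForm ℝ V}

lemma eq_of_forall_apply_eq (hnd : g.Nondegenerate) {a b : V} (h : ∀ w, g a w = g b w) :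
    a = b :=
  LinearMap.ker_eq_bot.mp (LinearMap.separatingLeft_iff_ker_eq_bot.mp hnd.1) (LinearMap.ext h)

lemma apply_self_eq_zero_of_skew (hsymm : ∀ x y, g x y = g y x) {J : V →ₗ[ℝ] V}
    (hskew : ∀ x y, g (J x) y = - g x (J y)) (x : V) : g (J x) x = 0 := by
  linarith [hskew x x, hsymm (J x) x]

lemma RJ_apply_left_self_self {J : V →ₗ[ℝ] V} {X : V} (hX : g (J X) X = 0) (Y W : V) :
    RJ g J Y X X W = 3 * g (J Y) X * g (J X) W := by
  rw [RJ, hX]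
  ring

lemma apply_apply_of_hurwitz (hsymm : ∀ x y, g x y = g y x) {m : ℕ} {c : Fin m → ℝ}
    {J : Fin m → V →ₗ[ℝ] V} (hskew : ∀ i, ∀ x y : V, g (J i x) y = - g x (J i y))
    (hhur : ∀ i j, J i ∘ₗ J j + J j ∘ₗ J i
      = ((if i = j then 2 * c i else 0 : ℝ) • LinearMap.id : V →ₗ[ℝ] V))
    (X : V) (i k : Fin m) :
    g (J i X) (J k X) = if i = k then -(c i * g X X) else 0 := by
  have hX := congrArg (fun w => g w X) (LinearMap.congr_fun (hhur i k) X)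
  simp only [LinearMap.add_apply, LinearMap.comp_apply, LinearMap.smul_apply, LinearMap.id_apply,
    map_add, map_smul, smul_eq_mul] at hX
  rw [hskew i (J k X) X, hskew k (J i X) X, hsymm (J k X) (J i X)] at hX
  split_ifs at hX ⊢ <;> linarith

variable {m : ℕ} {μ₀ : ℝ} {μ : Fin m → ℝ} {J : Fin m → V →ₗ[ℝ] V}
  {R : V → V → V → V → ℝ} {Jac : V → V →ₗ[ℝ] V}

lemma jacobi_apply (hsymm : ∀ x y, g x y = g y x) (hnd : g.Nondegenerate)
    (hskew : ∀ i, ∀ x y : V, g (J i x) y = - g x (J i y))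
    (hR : ∀ X Y Z W, R X Y Z W = μ₀ * R0 g X Y Z W + ∑ i, μ i * RJ g (J i) X Y Z W)
    (hJac : ∀ X Y Z, g (Jac X Y) Z = R Y X X Z) (X Y : V) :
    Jac X Y = μ₀ • (g X X • Y - g Y X • X) - (3 : ℝ) • ∑ i, (μ i * g Y (J i X)) • J i X := by
  refine eq_of_forall_apply_eq hnd fun w => ?_
  have hterm (i : Fin m) : μ i * RJ g (J i) Y X X w = -3 * (μ i * g Y (J i X) * g (J i X) w) := by
    rw [RJ_apply_left_self_self (apply_self_eq_zero_of_skew hsymm (hskew i) X), hskew]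
    ring
  simp only [hJac, hR, R0, hterm, ← Finset.mul_sum, map_sub, map_smul, map_sum,
    LinearMap.sub_apply, LinearMap.smul_apply, LinearMap.sum_apply, smul_eq_mul]
  ring

end QuasiClifford

theorem quasiClifford_jacobi_eigenvectors_general
    {V : Type*} [AddCommGroup V] [Module ℝ V]
    (g : LinearMap.BilinForm ℝ V) (hsymm : ∀ x y, g x y = g y x) (hnd : g.Nondegenerate)
    {m : ℕ} (μ₀ : ℝ) (μ c : Fin m → ℝ) (J : Fin m → V →ₗ[ℝ] V)
    (hskew : ∀ i, ∀ x y : V, g (J i x) y = - g x (J i y))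
    (hhur : ∀ i j, J i ∘ₗ J j + J j ∘ₗ J i
      = ((if i = j then 2 * c i else 0 : ℝ) • LinearMap.id : V →ₗ[ℝ] V))
    (R : V → V → V → V → ℝ)
    (hR : ∀ X Y Z W, R X Y Z W = μ₀ * R0 g X Y Z W + ∑ i, μ i * RJ g (J i) X Y Z W)
    (Jac : V → V →ₗ[ℝ] V)
    (hJac : ∀ X Y Z, g (Jac X Y) Z = R Y X X Z) :
    ∀ X : V,
      (∀ i, Jac X (J i X) = (g X X * (μ₀ + 3 * c i * μ i)) • J i X) ∧
      (∀ Z : V, g Z X = 0 → (∀ i, g Z (J i X) = 0) → Jac X Z = (g X X * μ₀) • Z) := by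
  intro X
  have hJac_apply := QuasiClifford.jacobi_apply hsymm hnd hskew hR hJac X
  refine ⟨fun k => ?_, fun Z hZX hZJ => ?_⟩
  · have hJkX := QuasiClifford.apply_self_eq_zero_of_skew hsymm (hskew k) X
    simp only [hJac_apply, hJkX, QuasiClifford.apply_apply_of_hurwitz hsymm hskew hhur, mul_ite,
      mul_zero, ite_smul, zero_smul, Finset.sum_ite_eq, Finset.mem_univ, if_true]
    module
  · simp only [hJac_apply, hZX, hZJ, mul_zero, zero_smul, Finset.sum_const_zero, sub_zero,
      smul_zero, smul_smul, mul_comm]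

/-- for a quasi-Clifford curvature tensor,
`𝒥_X(JᵢX) = ε_X(μ₀+3cᵢμᵢ) JᵢX`, and `𝒥_X(Z) = ε_X μ₀ Z` for `Z` orthogonal to
each of `X, J₁X, …, J_mX`. -/
theorem quasiClifford_jacobi_eigenvectors
    {V : Type*} [AddCommGroup V] [Module ℝ V] [FiniteDimensional ℝ V]
    (g : LinearMap.BilinForm ℝ V) (hsymm : ∀ x y, g x y = g y x) (hnd : g.Nondegenerate)
    {m : ℕ} (μ₀ : ℝ) (μ c : Fin m → ℝ) (J : Fin m → V →ₗ[ℝ] V)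
    (hskew : ∀ i, ∀ x y : V, g (J i x) y = - g x (J i y))
    (hhur : ∀ i j, J i ∘ₗ J j + J j ∘ₗ J i
      = ((if i = j then 2 * c i else 0 : ℝ) • LinearMap.id : V →ₗ[ℝ] V))
    (R : V → V → V → V → ℝ)
    (hR : ∀ X Y Z W, R X Y Z W = μ₀ * R0 g X Y Z W + ∑ i, μ i * RJ g (J i) X Y Z W)
    (Jac : V → V →ₗ[ℝ] V)
    (hJac : ∀ X Y Z, g (Jac X Y) Z = R Y X X Z) :
    ∀ X : V,
      (∀ i, Jac X (J i X) = (g X X * (μ₀ + 3 * c i * μ i)) • J i X) ∧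
      (∀ Z : V, g Z X = 0 → (∀ i, g Z (J i X) = 0) → Jac X Z = (g X X * μ₀) • Z) :=
  quasiClifford_jacobi_eigenvectors_general g hsymm hnd μ₀ μ c J hskew hhur R hR Jac hJac
end

section
/- Let R = μ₀R⁰ + Σ_{i=1}^m μᵢR^{Jᵢ} be a quasi-Clifford algebraic curvature tensor on a scalar product space (V,g), with Hurwitz-like constants satisfying cᵢ ≠ 0 for 1 ≤ i ≤ k and cᵢ = 0 for k < i ≤ m. Then for every nonnull X ∈ V and every Y ∈ V orthogonal to each of X, J₁X, …, J_kX, one has (𝒥_X − ε_X·μ₀·id)²(Y) = 0; in particular the restriction of 𝒥_X − ε_X·μ₀·id to the orthogonal complement of {X, J₁X, …, J_kX} is two-step nilpotent. -/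
open Module Finset

/-!
Contracting the curvature tensor with `X` twice gives the explicit Jacobi operator
`𝒥_X W = ε_X μ₀ W − μ₀ g(W,X) X − 3 Σᵢ μᵢ g(W,JᵢX) JᵢX`, so `A = 𝒥_X − ε_X μ₀ id` maps
`X^⊥` into the span of the `JᵢX`. For `Y` orthogonal to `X` and to the `JᵢX` with `cᵢ ≠ 0`,
`A Y` is a combination of the `JᵢX` with `cᵢ = 0`. Such a `Jᵢ` anticommutes with every `Jⱼ`
(including itself), so `JᵢX` is orthogonal to `X` and to all `JⱼX`, and hence `A (JᵢX) = 0`.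
-/

namespace QuasiClifford

variable {V : Type*} [AddCommGroup V] [Module ℝ V] {g : LinearMap.BilinForm ℝ V}

theorem skew_apply_self (hsymm : ∀ x y, g x y = g y x) {T : V →ₗ[ℝ] V}
    (hT : ∀ x y, g (T x) y = - g x (T y)) (x : V) : g (T x) x = 0 := by
  linarith [hT x x, hsymm (T x) x]

theorem apply_apply_eq_zero_of_anticomm (hsymm : ∀ x y, g x y = g y x) {S T : V →ₗ[ℝ] V}
    (hS : ∀ x y, g (S x) y = - g x (S y)) (hT : ∀ x y, g (T x) y = - g x (T y))
    (hST : S ∘ₗ T + T ∘ₗ S = 0) (x : V) : g (S x) (T x) = 0 := by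
  have h := congrArg (fun f : V →ₗ[ℝ] V => g x (f x)) hST
  simp only [LinearMap.add_apply, LinearMap.comp_apply, LinearMap.zero_apply, map_add,
    map_zero] at h
  linarith [hS x (T x), hT x (S x), hsymm (T x) (S x)]

theorem RJ_apply_self_self (hsymm : ∀ x y, g x y = g y x) {J : V →ₗ[ℝ] V}
    (hJ : ∀ x y, g (J x) y = - g x (J y)) (W X Z : V) :
    RJ g J W X X Z = -(3 * g W (J X) * g (J X) Z) := by
  simp only [RJ, skew_apply_self hsymm hJ, hJ W X]
  ring

variable {ι : Type*} [Fintype ι] {μ₀ : ℝ} {μ : ι → ℝ} {J : ι → V →ₗ[ℝ] V}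
  {R : V → V → V → V → ℝ} {Jac : V → V →ₗ[ℝ] V}

theorem jacobi_sub_apply (hsymm : ∀ x y, g x y = g y x) (hsep : g.SeparatingLeft)
    (hskew : ∀ i, ∀ x y : V, g (J i x) y = - g x (J i y))
    (hR : ∀ X Y Z W, R X Y Z W = μ₀ * R0 g X Y Z W + ∑ i, μ i * RJ g (J i) X Y Z W)
    (hJac : ∀ X Y Z, g (Jac X Y) Z = R Y X X Z) (X W : V) :
    (Jac X - (g X X * μ₀) • (LinearMap.id : V →ₗ[ℝ] V)) W
      = -((μ₀ * g W X) • X + ∑ i, (3 * μ i * g W (J i X)) • J i X) := by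
  refine sub_eq_zero.mp (hsep _ fun Z => ?_)
  simp only [LinearMap.sub_apply, LinearMap.smul_apply, LinearMap.id_apply, map_sub, map_neg,
    map_add, map_smul, map_sum, LinearMap.neg_apply, LinearMap.add_apply, LinearMap.sum_apply,
    smul_eq_mul, hJac, hR, R0, RJ_apply_self_self hsymm (hskew _)]
  simp only [mul_neg, Finset.sum_neg_distrib, mul_assoc, mul_left_comm (μ _)]
  ring

theorem jacobi_sub_apply_eq_zero_of_anticomm (hsymm : ∀ x y, g x y = g y x)
    (hsep : g.SeparatingLeft) (hskew : ∀ i, ∀ x y : V, g (J i x) y = - g x (J i y))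
    (hR : ∀ X Y Z W, R X Y Z W = μ₀ * R0 g X Y Z W + ∑ i, μ i * RJ g (J i) X Y Z W)
    (hJac : ∀ X Y Z, g (Jac X Y) Z = R Y X X Z) {i : ι}
    (hanti : ∀ j, J i ∘ₗ J j + J j ∘ₗ J i = 0) (X : V) :
    (Jac X - (g X X * μ₀) • (LinearMap.id : V →ₗ[ℝ] V)) (J i X) = 0 := by
  simp [jacobi_sub_apply hsymm hsep hskew hR hJac, skew_apply_self hsymm (hskew i),
    apply_apply_eq_zero_of_anticomm hsymm (hskew i) (hskew _) (hanti _)]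

end QuasiClifford

open QuasiClifford in
theorem quasiClifford_two_step_nilpotent_general
    {V : Type*} [AddCommGroup V] [Module ℝ V]
    (g : LinearMap.BilinForm ℝ V) (hsymm : ∀ x y, g x y = g y x) (hnd : g.Nondegenerate)
    {m : ℕ} (μ₀ : ℝ) (μ c : Fin m → ℝ) (J : Fin m → V →ₗ[ℝ] V)
    (hskew : ∀ i, ∀ x y : V, g (J i x) y = - g x (J i y))
    (hhur : ∀ i j, J i ∘ₗ J j + J j ∘ₗ J i
      = ((if i = j then 2 * c i else 0 : ℝ) • LinearMap.id : V →ₗ[ℝ] V))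
    (R : V → V → V → V → ℝ)
    (hR : ∀ X Y Z W, R X Y Z W = μ₀ * R0 g X Y Z W + ∑ i, μ i * RJ g (J i) X Y Z W)
    (Jac : V → V →ₗ[ℝ] V)
    (hJac : ∀ X Y Z, g (Jac X Y) Z = R Y X X Z)
    (k : ℕ)
    (hc₂ : ∀ i : Fin m, k ≤ (i : ℕ) → c i = 0) :
    ∀ X : V, g X X ≠ 0 → ∀ Y : V, g Y X = 0 → (∀ i : Fin m, (i : ℕ) < k → g Y (J i X) = 0) →
      (Jac X - (g X X * μ₀) • (LinearMap.id : V →ₗ[ℝ] V))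
        ((Jac X - (g X X * μ₀) • (LinearMap.id : V →ₗ[ℝ] V)) Y) = 0 := by
  intro X _ Y hYX hYJ
  rw [jacobi_sub_apply hsymm hnd.1 hskew hR hJac X Y, hYX, mul_zero, zero_smul, zero_add, map_neg,
    map_sum, neg_eq_zero]
  refine Finset.sum_eq_zero fun i _ => ?_
  rw [map_smul]
  rcases lt_or_ge (i : ℕ) k with hik | hik
  · rw [hYJ i hik, mul_zero, zero_smul]
  · have hanti : ∀ j, J i ∘ₗ J j + J j ∘ₗ J i = 0 := fun j => by
      rw [hhur]
      split_ifs <;> simp [hc₂ i hik]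
    rw [jacobi_sub_apply_eq_zero_of_anticomm hsymm hnd.1 hskew hR hJac hanti, smul_zero]

/-- for a quasi-Clifford curvature tensor with `cᵢ ≠ 0` for `i ≤ k` and
`cᵢ = 0` for `i > k`, the operator `𝒥_X − ε_X μ₀ id` is two-step nilpotent on the
orthogonal complement of `{X, J₁X, …, J_kX}`, for every nonnull `X`. -/
theorem quasiClifford_two_step_nilpotent
    {V : Type*} [AddCommGroup V] [Module ℝ V] [FiniteDimensional ℝ V]
    (g : LinearMap.BilinForm ℝ V) (hsymm : ∀ x y, g x y = g y x) (hnd : g.Nondegenerate)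
    {m : ℕ} (μ₀ : ℝ) (μ c : Fin m → ℝ) (J : Fin m → V →ₗ[ℝ] V)
    (hskew : ∀ i, ∀ x y : V, g (J i x) y = - g x (J i y))
    (hhur : ∀ i j, J i ∘ₗ J j + J j ∘ₗ J i
      = ((if i = j then 2 * c i else 0 : ℝ) • LinearMap.id : V →ₗ[ℝ] V))
    (R : V → V → V → V → ℝ)
    (hR : ∀ X Y Z W, R X Y Z W = μ₀ * R0 g X Y Z W + ∑ i, μ i * RJ g (J i) X Y Z W)
    (Jac : V → V →ₗ[ℝ] V)
    (hJac : ∀ X Y Z, g (Jac X Y) Z = R Y X X Z)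
    (k : ℕ) (hk : k ≤ m)
    (hc₁ : ∀ i : Fin m, (i : ℕ) < k → c i ≠ 0)
    (hc₂ : ∀ i : Fin m, k ≤ (i : ℕ) → c i = 0) :
    ∀ X : V, g X X ≠ 0 → ∀ Y : V, g Y X = 0 → (∀ i : Fin m, (i : ℕ) < k → g Y (J i X) = 0) →
      (Jac X - (g X X * μ₀) • (LinearMap.id : V →ₗ[ℝ] V))
        ((Jac X - (g X X * μ₀) • (LinearMap.id : V →ₗ[ℝ] V)) Y) = 0 :=
  quasiClifford_two_step_nilpotent_general g hsymm hnd μ₀ μ c J hskew hhur R hR Jac hJac k hc₂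
end

section
/- Let J₁,…,J_m be g-skew-adjoint endomorphisms of a scalar product space (V,g) satisfying the Hurwitz-like relations JᵢJⱼ + JⱼJᵢ = 2cᵢδᵢⱼ·id with cᵢ ≠ 0 for all 1 ≤ i ≤ m. Then for every nonnull X ∈ V, the vectors X, J₁X, …, J_mX are mutually orthogonal and nonnull (with ε_{JᵢX} = −cᵢ·ε_X), and in particular the family (X, J₁X, …, J_mX) is linearly independent. -/
open Module Finset

/-- for an anti-commutative family of `g`-skew-adjoint endomorphisms with
`JᵢJⱼ + JⱼJᵢ = 2cᵢδᵢⱼ id`, `cᵢ ≠ 0`, and a nonnull `X`, the vectors `X, J₁X, …, J_mX`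
are mutually orthogonal and nonnull (with `ε_{JᵢX} = −cᵢ ε_X`), hence linearly
independent. -/
theorem quasiClifford_family_linearIndependent
    {V : Type*} [AddCommGroup V] [Module ℝ V] [FiniteDimensional ℝ V]
    (g : LinearMap.BilinForm ℝ V) (hsymm : ∀ x y, g x y = g y x) (hnd : g.Nondegenerate)
    {m : ℕ} (c : Fin m → ℝ) (J : Fin m → V →ₗ[ℝ] V)
    (hskew : ∀ i, ∀ x y : V, g (J i x) y = - g x (J i y))
    (hhur : ∀ i j, J i ∘ₗ J j + J j ∘ₗ J i
      = ((if i = j then 2 * c i else 0 : ℝ) • LinearMap.id : V →ₗ[ℝ] V))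
    (hc : ∀ i, c i ≠ 0) :
    ∀ X : V, g X X ≠ 0 →
      (∀ i, g X (J i X) = 0) ∧
      (∀ i j, i ≠ j → g (J i X) (J j X) = 0) ∧
      (∀ i, g (J i X) (J i X) = - c i * g X X) ∧
      (∀ i, g (J i X) (J i X) ≠ 0) ∧
      LinearIndependent ℝ (Fin.cons X (fun i : Fin m => J i X) : Fin (m + 1) → V) := by
  intro X hX
  have h1 : ∀ i, g X (J i X) = 0 := by
    intro i
    have h := hskew i X X
    rw [hsymm (J i X) X] at h
    linarith
  have hsq : ∀ i, J i (J i X) = c i • X := by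
    intro i
    have h := congrFun (congrArg DFunLike.coe (hhur i i)) X
    simp only [if_pos rfl, LinearMap.add_apply, LinearMap.comp_apply,
      LinearMap.smul_apply, LinearMap.id_apply] at h
    have h' : (2 : ℝ) • J i (J i X) = (2 : ℝ) • (c i • X) := by
      rw [two_smul, h, if_pos trivial, mul_smul]
    exact smul_right_injective V (by norm_num) h'
  have hanti : ∀ i j, i ≠ j → J i (J j X) + J j (J i X) = 0 := by
    intro i j hij
    have h := congrFun (congrArg DFunLike.coe (hhur i j)) X
    simp only [if_neg hij, LinearMap.add_apply, LinearMap.comp_apply,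
      LinearMap.smul_apply, LinearMap.id_apply, zero_smul] at h
    exact h
  have h2 : ∀ i j, i ≠ j → g (J i X) (J j X) = 0 := by
    intro i j hij
    have ha : g (J i X) (J j X) = - g X (J i (J j X)) := hskew i X (J j X)
    have hb : g (J j X) (J i X) = - g X (J j (J i X)) := hskew j X (J i X)
    have hsum : g (J i X) (J j X) + g (J j X) (J i X)
        = - g X (J i (J j X) + J j (J i X)) := by
      rw [map_add, ha, hb]; ring
    rw [hanti i j hij, map_zero, neg_zero] at hsum
    have := hsymm (J j X) (J i X)
    linarith
  have h3 : ∀ i, g (J i X) (J i X) = - c i * g X X := by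
    intro i
    have ha : g (J i X) (J i X) = - g X (J i (J i X)) := hskew i X (J i X)
    rw [hsq i, map_smul, smul_eq_mul] at ha
    rw [ha]; ring
  have h4 : ∀ i, g (J i X) (J i X) ≠ 0 := by
    intro i
    rw [h3 i]
    exact mul_ne_zero (neg_ne_zero.mpr (hc i)) hX
  refine ⟨h1, h2, h3, h4, ?_⟩
  set v : Fin (m + 1) → V := Fin.cons X (fun i : Fin m => J i X) with hv
  have hvij : ∀ i j : Fin (m + 1), i ≠ j → g (v i) (v j) = 0 := by
    intro i j
    refine Fin.cases ?_ (fun i' => ?_) i <;>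
      refine Fin.cases ?_ (fun j' => ?_) j <;> intro hij
    · exact absurd rfl hij
    · simpa [hv] using h1 j'
    · simpa [hv] using (hsymm X (J i' X)).symm.trans (h1 i')
    · have hij' : i' ≠ j' := fun h => hij (by rw [h])
      simpa [hv] using h2 i' j' hij'
  have hvii : ∀ i : Fin (m + 1), g (v i) (v i) ≠ 0 := by
    intro i
    refine Fin.cases ?_ (fun i' => ?_) i
    · simpa [hv] using hX
    · simpa [hv] using h4 i'
  rw [Fintype.linearIndependent_iff]
  intro a ha k
  have key : g (∑ l, a l • v l) (v k) = a k * g (v k) (v k) := by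
    rw [map_sum, LinearMap.sum_apply]
    rw [Finset.sum_eq_single k]
    · rw [map_smul, LinearMap.smul_apply, smul_eq_mul]
    · intro l _ hlk
      rw [map_smul, LinearMap.smul_apply, hvij l k hlk, smul_zero]
    · simp
  rw [ha, map_zero, LinearMap.zero_apply] at key
  exact (mul_eq_zero.mp key.symm).resolve_right (hvii k)
end

section
/- There exist a scalar product space (V,g) and a quasi-Clifford algebraic curvature tensor R on (V,g) such that R is not Jacobi-dual: there are vectors X, Y ∈ V with ε_X ≠ 0 such that Y is an eigenvector of 𝒥_X but X is not an eigenvector of 𝒥_Y. -/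
open Module Finset

/-!
On `ℝ^{3,3}` (the form `diag(1, 1, 1, -1, -1, -1)`) take mutually orthogonal null vectors
`u, v, n` and the skew-adjoint operators `J₁ = u ∧ n`, `J₂ = v ∧ n`, where
`(a ∧ b) x = g(x, a) b - g(x, b) a`. Since `span {u, v, n}` is totally isotropic, all products
`Jᵢ Jⱼ` vanish, so `R = R^{J₁} - R^{J₂}` is quasi-Clifford with `c = 0`. For skew-adjoint `Jᵢ`
the Jacobi operator of `Σ μᵢ R^{Jᵢ}` is `𝒥_X Y = 3 Σ μᵢ g(Jᵢ Y, X) Jᵢ X`. For `X = e₁ + e₂` and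
`Y = e₃` we get `J₁ X = J₂ X = n`, so the two terms of `𝒥_X Y` cancel, while
`𝒥_Y X = 3 (v - u)` is not a multiple of `X`.
-/

open LinearMap (BilinForm)

noncomputable section

section QuasiClifford

variable {V : Type*} [AddCommGroup V] [Module ℝ V]

def quasiCliffordJacobi {m : ℕ} (g : BilinForm ℝ V) (μ₀ : ℝ) (μ : Fin m → ℝ)
    (J : Fin m → V →ₗ[ℝ] V) (X : V) : V →ₗ[ℝ] V :=
  μ₀ • (g X X • LinearMap.id - (g.flip X).smulRight X) +
    ∑ i, μ i • ((3 : ℝ) • (g.flip X ∘ₗ J i).smulRight (J i X) - g (J i X) X • J i)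

variable {m : ℕ} {g : BilinForm ℝ V} {μ₀ : ℝ} {μ : Fin m → ℝ} {J : Fin m → V →ₗ[ℝ] V}

theorem quasiCliffordJacobi_apply (X Y : V) :
    quasiCliffordJacobi g μ₀ μ J X Y = μ₀ • (g X X • Y - g Y X • X) +
      ∑ i, μ i • ((3 * g (J i Y) X) • J i X - g (J i X) X • J i Y) := by
  simp [quasiCliffordJacobi, mul_smul]

theorem apply_quasiCliffordJacobi (X Y Z : V) :
    g (quasiCliffordJacobi g μ₀ μ J X Y) Z =
      μ₀ * R0 g Y X X Z + ∑ i, μ i * RJ g (J i) Y X X Z := by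
  simp only [quasiCliffordJacobi_apply, map_add, map_sub, map_smul, map_sum,
    LinearMap.add_apply, LinearMap.sub_apply, LinearMap.smul_apply, LinearMap.sum_apply,
    smul_eq_mul, R0, RJ]
  congr 1
  exact Finset.sum_congr rfl fun i _ => by ring

theorem quasiCliffordJacobi_apply_of_skew (hg : ∀ x y, g x y = g y x)
    (hJ : ∀ i x y, g (J i x) y = - g x (J i y)) (X Y : V) :
    quasiCliffordJacobi g μ₀ μ J X Y =
      μ₀ • (g X X • Y - g Y X • X) + ∑ i, (3 * μ i * g (J i Y) X) • J i X := by
  have hJXX (i : Fin m) : g (J i X) X = 0 := by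
    linarith [hJ i X X, hg X (J i X)]
  simp only [quasiCliffordJacobi_apply, hJXX, zero_smul, sub_zero]
  congr 1
  exact Finset.sum_congr rfl fun i _ => by module

end QuasiClifford

section SkewWedge

variable {V : Type*} [AddCommGroup V] [Module ℝ V] {g : BilinForm ℝ V}

def skewWedge (g : BilinForm ℝ V) (a b : V) : V →ₗ[ℝ] V :=
  (g.flip a).smulRight b - (g.flip b).smulRight a

theorem skewWedge_apply (a b x : V) : skewWedge g a b x = g x a • b - g x b • a := rfl

theorem apply_skewWedge (a b x y : V) :
    g (skewWedge g a b x) y = g x a * g b y - g x b * g a y := by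
  simp [skewWedge_apply]

theorem skewWedge_isSkew (hg : ∀ x y, g x y = g y x) (a b x y : V) :
    g (skewWedge g a b x) y = - g x (skewWedge g a b y) := by
  rw [apply_skewWedge, hg x (skewWedge g a b y), apply_skewWedge, hg a x, hg b x, hg a y, hg b y]
  ring

theorem skewWedge_comp_skewWedge {a b c d : V} (hca : g c a = 0) (hcb : g c b = 0)
    (hda : g d a = 0) (hdb : g d b = 0) : skewWedge g a b ∘ₗ skewWedge g c d = 0 := by
  ext x
  simp [skewWedge_apply, hca, hcb, hda, hdb]

end SkewWedge

namespace NeutralSignatureExample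

abbrev E : Type := Fin 6 → ℝ

def η : BilinForm ℝ E := Matrix.toBilin' (Matrix.diagonal ![1, 1, 1, -1, -1, -1])

theorem η_apply (x y : E) :
    η x y = x 0 * y 0 + x 1 * y 1 + x 2 * y 2 - x 3 * y 3 - x 4 * y 4 - x 5 * y 5 := by
  simp [η, Matrix.toBilin'_apply, Fin.sum_univ_six]
  ring

theorem η_comm (x y : E) : η x y = η y x := by
  rw [η_apply, η_apply]
  ring

theorem η_nondegenerate : η.Nondegenerate :=
  LinearMap.BilinForm.nondegenerate_toBilin'_of_det_ne_zero' _ (by simp [Fin.prod_univ_six])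

def u : E := ![1, 0, 0, 1, 0, 0]
def v : E := ![0, 1, 0, 0, 1, 0]
def n : E := ![0, 0, 1, 0, 0, 1]
def X : E := ![1, 1, 0, 0, 0, 0]
def Y : E := ![0, 0, 1, 0, 0, 0]

def J : Fin 2 → E →ₗ[ℝ] E := ![skewWedge η u n, skewWedge η v n]
def μ : Fin 2 → ℝ := ![1, -1]

theorem J_skew (i : Fin 2) (x y : E) : η (J i x) y = - η x (J i y) := by
  fin_cases i <;> exact skewWedge_isSkew η_comm _ _ x y

theorem η_isotropic {a b : E} (ha : a ∈ ({u, v, n} : Set E)) (hb : b ∈ ({u, v, n} : Set E)) :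
    η a b = 0 := by
  rcases ha with rfl | rfl | rfl <;> rcases hb with rfl | rfl | rfl <;> simp [η_apply, u, v, n]

theorem J_comp_J (i j : Fin 2) : J i ∘ₗ J j = 0 := by
  fin_cases i <;> fin_cases j <;>
    exact skewWedge_comp_skewWedge (η_isotropic (by simp) (by simp))
      (η_isotropic (by simp) (by simp)) (η_isotropic (by simp) (by simp))
      (η_isotropic (by simp) (by simp))

theorem J_X (i : Fin 2) : J i X = n := by
  fin_cases i <;> simp [J, skewWedge_apply, η_apply, u, v, n, X]

theorem J_zero_Y : J 0 Y = -u := by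
  simp [J, skewWedge_apply, η_apply, u, n, Y]

theorem J_one_Y : J 1 Y = -v := by
  simp [J, skewWedge_apply, η_apply, v, n, Y]

theorem jacobi_X_Y : quasiCliffordJacobi η 0 μ J X Y = 0 := by
  rw [quasiCliffordJacobi_apply_of_skew η_comm J_skew, Fin.sum_univ_two, J_X, J_X, J_zero_Y,
    J_one_Y]
  simp [μ, η_apply, u, v, X]

theorem jacobi_Y_X : quasiCliffordJacobi η 0 μ J Y X = (3 : ℝ) • (v - u) := by
  rw [quasiCliffordJacobi_apply_of_skew η_comm J_skew, Fin.sum_univ_two, J_X, J_X, J_zero_Y,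
    J_one_Y]
  simp [μ, η_apply, n, Y]
  module

theorem jacobi_X_hasEigenvector_Y : End.HasEigenvector (quasiCliffordJacobi η 0 μ J X) 0 Y :=
  ⟨by simp [jacobi_X_Y], fun h => by simpa [Y] using congrFun h 2⟩

theorem jacobi_Y_not_hasEigenvector_X (lam : ℝ) :
    ¬ End.HasEigenvector (quasiCliffordJacobi η 0 μ J Y) lam X :=
  fun h => by
    have h3 := congrFun (jacobi_Y_X.symm.trans h.apply_eq_smul) 3
    simp [u, v, X] at h3

end NeutralSignatureExample

end

open NeutralSignatureExample in
/-- Theorem 3 of the paper: there exists a quasi-Clifford (hence Osserman)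
algebraic curvature tensor on some scalar product space that is not Jacobi-dual. -/
theorem exists_quasiClifford_not_jacobiDual :
    ∃ (V : Type) (_ : AddCommGroup V) (_ : Module ℝ V) (_ : FiniteDimensional ℝ V)
      (g : LinearMap.BilinForm ℝ V),
      (∀ x y, g x y = g y x) ∧ g.Nondegenerate ∧
      ∃ (m : ℕ) (μ₀ : ℝ) (μ c : Fin m → ℝ) (J : Fin m → V →ₗ[ℝ] V)
        (R : V → V → V → V → ℝ) (Jac : V → V →ₗ[ℝ] V),
        (∀ i, ∀ x y : V, g (J i x) y = - g x (J i y)) ∧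
        (∀ i j, J i ∘ₗ J j + J j ∘ₗ J i
          = ((if i = j then 2 * c i else 0 : ℝ) • LinearMap.id : V →ₗ[ℝ] V)) ∧
        (∀ X Y Z W, R X Y Z W = μ₀ * R0 g X Y Z W + ∑ i, μ i * RJ g (J i) X Y Z W) ∧
        (∀ X Y Z, g (Jac X Y) Z = R Y X X Z) ∧
        ∃ X Y : V, g X X ≠ 0 ∧
          (∃ lam : ℝ, Module.End.HasEigenvector (Jac X) lam Y) ∧
          ¬ ∃ lam : ℝ, Module.End.HasEigenvector (Jac Y) lam X := by
  refine ⟨E, inferInstance, inferInstance, inferInstance, η, η_comm, η_nondegenerate,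
    2, 0, μ, 0, J, _, quasiCliffordJacobi η 0 μ J, J_skew, fun i j => ?_, fun _ _ _ _ => rfl,
    apply_quasiCliffordJacobi, X, Y, ?_, ⟨0, jacobi_X_hasEigenvector_Y⟩,
    fun ⟨lam, h⟩ => jacobi_Y_not_hasEigenvector_X lam h⟩
  · simp [J_comp_J]
  · simp [η_apply, X]
end

section
/- Let J₁,…,J_m be g-skew-adjoint endomorphisms of a scalar product space (V,g) satisfying the Hurwitz-like relations JᵢJⱼ + JⱼJᵢ = 2cᵢδᵢⱼ·id for some c₁,…,c_m ∈ ℝ. If θ₀·X + θ₁·J₁X + ⋯ + θ_m·J_mX = 0 holds for some real numbers θ₀,θ₁,…,θ_m and some vector X ≠ 0, then θ₀² − c₁θ₁² − ⋯ − c_mθ_m² = 0. -/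
open Module Finset

/-- Theorem 5 of the paper: if `θ₀X + θ₁J₁X + ⋯ + θ_mJ_mX = 0` for some
`X ≠ 0`, where the `Jᵢ` are `g`-skew-adjoint and satisfy the Hurwitz-like relations
`JᵢJⱼ + JⱼJᵢ = 2cᵢδᵢⱼ id`, then `θ₀² − c₁θ₁² − ⋯ − c_mθ_m² = 0`. -/
theorem theta_relation_of_linear_dependence
    {V : Type*} [AddCommGroup V] [Module ℝ V] [FiniteDimensional ℝ V]
    (g : LinearMap.BilinForm ℝ V) (hsymm : ∀ x y, g x y = g y x) (hnd : g.Nondegenerate)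
    {m : ℕ} (c : Fin m → ℝ) (J : Fin m → V →ₗ[ℝ] V)
    (hskew : ∀ i, ∀ x y : V, g (J i x) y = - g x (J i y))
    (hhur : ∀ i j, J i ∘ₗ J j + J j ∘ₗ J i
      = ((if i = j then 2 * c i else 0 : ℝ) • LinearMap.id : V →ₗ[ℝ] V))
    (θ₀ : ℝ) (θ : Fin m → ℝ) (X : V) (hX : X ≠ 0)
    (hdep : θ₀ • X + ∑ i, θ i • J i X = 0) :
    θ₀ ^ 2 - ∑ i, c i * θ i ^ 2 = 0 := by
  set S : V := ∑ i, ∑ j, (θ i * θ j) • J i (J j X) with hSdef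
  -- From the dependence relation applied with J i:
  have hJ : ∀ i, θ₀ • J i X = -∑ j, θ j • J i (J j X) := by
    intro i
    have h := congrArg (J i) hdep
    simp only [map_add, map_smul, map_sum, map_zero] at h
    exact eq_neg_of_add_eq_zero_left h
  -- θ₀² • X = S
  have h1 : (θ₀ ^ 2) • X = S := by
    have h0 : θ₀ • X = -∑ i, θ i • J i X := eq_neg_of_add_eq_zero_left hdep
    calc (θ₀ ^ 2) • X = θ₀ • (θ₀ • X) := by rw [smul_smul, sq]
      _ = -∑ i, θ i • (θ₀ • J i X) := by
          rw [h0, smul_neg, Finset.smul_sum]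
          congr 1
          exact Finset.sum_congr rfl fun i _ => smul_comm _ _ _
      _ = ∑ i, θ i • ∑ j, θ j • J i (J j X) := by
          rw [← Finset.sum_neg_distrib]
          exact Finset.sum_congr rfl fun i _ => by rw [hJ i, smul_neg, neg_neg]
      _ = S := by
          rw [hSdef]
          refine Finset.sum_congr rfl fun i _ => ?_
          rw [Finset.smul_sum]
          exact Finset.sum_congr rfl fun j _ => by rw [smul_smul]
  -- S = (∑ c i * θ i ^ 2) • X, via symmetrization and Hurwitz
  have h2 : S = (∑ i, c i * θ i ^ 2) • X := by
    have key : (2 : ℝ) • S = (2 : ℝ) • ((∑ i, c i * θ i ^ 2) • X) := by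
      have hSalt : S = ∑ i, ∑ j, (θ i * θ j) • J j (J i X) := by
        rw [hSdef, Finset.sum_comm]
        exact Finset.sum_congr rfl fun i _ => Finset.sum_congr rfl fun j _ => by
          rw [mul_comm]
      calc (2 : ℝ) • S = S + S := (two_smul ℝ S)
        _ = ∑ i, ∑ j, (θ i * θ j) • (J i (J j X) + J j (J i X)) := by
            nth_rewrite 2 [hSalt]
            rw [hSdef, ← Finset.sum_add_distrib]
            refine Finset.sum_congr rfl fun i _ => ?_
            rw [← Finset.sum_add_distrib]
            exact Finset.sum_congr rfl fun j _ => (smul_add _ _ _).symm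
        _ = ∑ i, ∑ j, (θ i * θ j) • ((if i = j then 2 * c i else 0 : ℝ) • X) := by
            refine Finset.sum_congr rfl fun i _ => Finset.sum_congr rfl fun j _ => ?_
            congr 1
            have h := congrArg (fun (f : V →ₗ[ℝ] V) => f X) (hhur i j)
            simp only [LinearMap.add_apply, LinearMap.comp_apply, LinearMap.smul_apply,
              LinearMap.id_apply] at h
            rw [h, ite_smul, zero_smul]
        _ = ∑ i, (θ i * θ i * (2 * c i)) • X := by
            refine Finset.sum_congr rfl fun i _ => ?_
            rw [Finset.sum_eq_single i]
            · rw [smul_smul]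
              simp
            · intro j _ hj
              simp [Ne.symm hj]
            · intro h; exact absurd (Finset.mem_univ i) h
        _ = (2 : ℝ) • ((∑ i, c i * θ i ^ 2) • X) := by
            rw [smul_smul, ← Finset.sum_smul]
            congr 1
            rw [Finset.mul_sum]
            exact Finset.sum_congr rfl fun i _ => by ring
    exact smul_right_injective V (two_ne_zero) key
  have h3 : (θ₀ ^ 2 - ∑ i, c i * θ i ^ 2) • X = 0 := by
    rw [sub_smul, h1, h2, sub_self]
  rcases smul_eq_zero.mp h3 with h | h
  · exact h
  · exact absurd h hX
end

section
/- Let J₁,…,J_m be g-skew-adjoint endomorphisms of a scalar product space (V,g) satisfying JᵢJⱼ + JⱼJᵢ = 2δᵢⱼ·id for all i,j (an anti-Clifford family), and let θ₀,θ₁,…,θ_m be real numbers, not all zero. Then for every nonnull D ∈ V one has −θ₀·D + θ₁·J₁D + ⋯ + θ_m·J_mD ≠ 0. -/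
open Module Finset

/-- for an anti-Clifford family (`g`-skew-adjoint, `JᵢJⱼ + JⱼJᵢ = 2δᵢⱼ id`)
and real numbers `θ₀, θ₁, …, θ_m`, not all zero, one has
`−θ₀D + θ₁J₁D + ⋯ + θ_mJ_mD ≠ 0` for every nonnull `D`. -/
theorem antiClifford_K_ne_zero_on_nonnull
    {V : Type*} [AddCommGroup V] [Module ℝ V] [FiniteDimensional ℝ V]
    (g : LinearMap.BilinForm ℝ V) (hsymm : ∀ x y, g x y = g y x) (hnd : g.Nondegenerate)
    {m : ℕ} (J : Fin m → V →ₗ[ℝ] V)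
    (hskew : ∀ i, ∀ x y : V, g (J i x) y = - g x (J i y))
    (hhur : ∀ i j, J i ∘ₗ J j + J j ∘ₗ J i
      = ((if i = j then 2 else 0 : ℝ) • LinearMap.id : V →ₗ[ℝ] V))
    (θ₀ : ℝ) (θ : Fin m → ℝ) (hθ : ¬ (θ₀ = 0 ∧ ∀ i, θ i = 0)) :
    ∀ D : V, g D D ≠ 0 → -θ₀ • D + ∑ i, θ i • J i D ≠ 0 := by
  intro D hD hK
  -- g (J i D) D = 0
  have hJD : ∀ i, g (J i D) D = 0 := by
    intro i
    have h1 : g (J i D) D = - g D (J i D) := hskew i D D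
    have h2 : g D (J i D) = g (J i D) D := hsymm _ _
    linarith [h1, h2.symm ▸ h1]
  -- g (J i D) (J j D) = -(if i = j then 1 else 0) * g D D
  have hJJ : ∀ i j, g (J i D) (J j D) = -(if i = j then 1 else 0 : ℝ) * g D D := by
    intro i j
    have h1 : g (J i D) (J j D) = - g D (J i (J j D)) := hskew i D (J j D)
    have h2 : g (J j D) (J i D) = - g D (J j (J i D)) := hskew j D (J i D)
    have hsym : g (J i D) (J j D) = g (J j D) (J i D) := hsymm _ _
    have h3 : J i (J j D) + J j (J i D) = (if i = j then 2 else 0 : ℝ) • D := by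
      have h := LinearMap.congr_fun (hhur i j) D
      rcases eq_or_ne i j with hij | hij <;>
        simpa [hij] using h
    have h4 : g D (J i (J j D)) + g D (J j (J i D)) = (if i = j then 2 else 0 : ℝ) * g D D := by
      have := congrArg (g D) h3
      simpa [map_add, map_smul, smul_eq_mul, ite_smul, mul_ite, apply_ite (g D)] using this
    rcases eq_or_ne i j with h | h
    · subst h
      rw [if_pos rfl] at h4; rw [if_pos rfl]; linarith
    · rw [if_neg h] at h4; rw [if_neg h]; linarith
  -- pair K with D : θ₀ = 0
  have hKD : g (-θ₀ • D + ∑ i, θ i • J i D) D = -θ₀ * g D D := by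
    simp [map_add, map_sum, map_smul, hJD, smul_eq_mul]
  have hθ0 : θ₀ = 0 := by
    rw [hK] at hKD
    simp at hKD
    rcases hKD with h | h
    · exact h
    · exact absurd h hD
  -- pair K with J j D : θ j = 0
  have hθi : ∀ j, θ j = 0 := by
    intro j
    have hKJ : g (-θ₀ • D + ∑ i, θ i • J i D) (J j D) = -θ j * g D D := by
      have hDJ : g D (J j D) = 0 := by rw [hsymm]; exact hJD j
      simp only [map_add, map_sum, LinearMap.add_apply, LinearMap.sum_apply,
        LinearMap.map_smul₂, LinearMap.smul_apply, smul_eq_mul]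
      rw [Finset.sum_eq_single j (fun i _ hij => by rw [hJJ, if_neg hij]; ring) (by simp)]
      rw [hDJ, hJJ, if_pos rfl]; ring
    rw [hK] at hKJ
    simp at hKJ
    rcases hKJ with h | h
    · exact h
    · exact absurd h hD
  exact hθ ⟨hθ0, hθi⟩
end

section
/- Let (V,g) be a scalar product space of dimension n = 2t ≥ 4 with an orthonormal basis (T₁,…,T_t,S₁,…,S_t) where g(Tᵢ,Tᵢ) = −1 and g(Sᵢ,Sᵢ) = 1, and let J be the endomorphism of V defined by JTᵢ = Sᵢ and JSᵢ = Tᵢ for all 1 ≤ i ≤ t. Then J is g-skew-adjoint with J² = id, and for every μ ≠ 0 the anti-Clifford algebraic curvature tensor R = 3μ·R⁰ − μ·R^J is not totally Jacobi-dual. -/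
/-!
Write `Tᵢ = b (inl i)`, `Sᵢ = b (inr i)`. For `g`-skew-adjoint `J`, the Jacobi operator of
`R = 3μ R⁰ − μ R^J` is `𝒥_X Y = 3μ (g(X,X) Y − g(X,Y) X + g(JX,Y) JX)`. The null vector
`X = T₁ + S₁` is fixed by `J`, so `𝒥_X = 0` and every nonzero vector is an eigenvector of `𝒥_X`.
For `Y = T₁ + S₂`, however, `𝒥_Y X = 3μ (Y + JY)` has a nonzero `T₂`-component, so `X` is not
an eigenvector of `𝒥_Y`.
-/

open Module

section AntiClifford

variable {V : Type*} [AddCommGroup V] [Module ℝ V] {g : LinearMap.BilinForm ℝ V}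
  {J : V →ₗ[ℝ] V}

theorem antiClifford_curvature_eq (hsymm : ∀ x y, g x y = g y x)
    (hskew : ∀ x y, g (J x) y = - g x (J y)) (μ : ℝ) (X Y Z : V) :
    3 * μ * R0 g Y X X Z - μ * RJ g J Y X X Z
      = g ((3 * μ) • (g X X • Y - g X Y • X + g (J X) Y • J X)) Z := by
  have hJXX : g (J X) X = 0 := by linarith [hskew X X, hsymm X (J X)]
  have hJYX : g (J Y) X = - g (J X) Y := by rw [hskew, hsymm]
  simp only [R0, RJ, map_add, map_sub, map_smul, LinearMap.add_apply, LinearMap.sub_apply,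
    LinearMap.smul_apply, smul_eq_mul, hJXX, hJYX, hsymm Y X]
  ring

theorem antiClifford_jacobi_eq (hsymm : ∀ x y, g x y = g y x) (hnd : g.Nondegenerate)
    (hskew : ∀ x y, g (J x) y = - g x (J y)) {μ : ℝ} {Jac : V → V →ₗ[ℝ] V}
    (hJac : ∀ X Y Z, g (Jac X Y) Z = 3 * μ * R0 g Y X X Z - μ * RJ g J Y X X Z) (X Y : V) :
    Jac X Y = (3 * μ) • (g X X • Y - g X Y • X + g (J X) Y • J X) :=
  sub_eq_zero.mp <| hnd.1 _ fun Z => by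
    rw [map_sub, LinearMap.sub_apply, hJac, antiClifford_curvature_eq hsymm hskew, sub_self]

theorem antiClifford_jacobi_eq_zero (hsymm : ∀ x y, g x y = g y x) (hnd : g.Nondegenerate)
    (hskew : ∀ x y, g (J x) y = - g x (J y)) {μ : ℝ} {Jac : V → V →ₗ[ℝ] V}
    (hJac : ∀ X Y Z, g (Jac X Y) Z = 3 * μ * R0 g Y X X Z - μ * RJ g J Y X X Z) {X : V}
    (hJX : J X = X) (hXX : g X X = 0) : Jac X = 0 :=
  LinearMap.ext fun Y => by simp [antiClifford_jacobi_eq hsymm hnd hskew hJac, hJX, hXX]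

end AntiClifford

section ProductStructure

variable {V : Type*} [AddCommGroup V] [Module ℝ V] {t : ℕ} {b : Basis (Fin t ⊕ Fin t) ℝ V}
  {J : V →ₗ[ℝ] V}

theorem skewAdjoint_of_basis_swap {g : LinearMap.BilinForm ℝ V}
    (hb : ∀ i j, g (b i) (b j)
      = if i = j then Sum.elim (fun _ => (-1 : ℝ)) (fun _ => 1) i else 0)
    (hJT : ∀ i, J (b (Sum.inl i)) = b (Sum.inr i)) (hJS : ∀ i, J (b (Sum.inr i)) = b (Sum.inl i))
    (x y : V) : g (J x) y = - g x (J y) := by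
  have : g.compl₁₂ J LinearMap.id = -g.compl₁₂ LinearMap.id J :=
    LinearMap.BilinForm.ext_basis b fun i j => by
      rcases i with i | i <;> rcases j with j | j <;>
        simp [hJT, hJS, hb, eq_comm (a := i)] <;> split_ifs <;> norm_num
  exact LinearMap.congr_fun₂ this x y

theorem comp_self_eq_id_of_basis_swap (hJT : ∀ i, J (b (Sum.inl i)) = b (Sum.inr i))
    (hJS : ∀ i, J (b (Sum.inr i)) = b (Sum.inl i)) : J ∘ₗ J = LinearMap.id :=
  b.ext fun i => by rcases i with i | i <;> simp [hJT, hJS]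

end ProductStructure

theorem product_structure_not_totally_jacobiDual_general
    {V : Type*} [AddCommGroup V] [Module ℝ V]
    (g : LinearMap.BilinForm ℝ V) (hsymm : ∀ x y, g x y = g y x) (hnd : g.Nondegenerate)
    (t : ℕ) (ht : 2 ≤ t) (b : Basis (Fin t ⊕ Fin t) ℝ V)
    (hb : ∀ i j, g (b i) (b j)
      = if i = j then Sum.elim (fun _ => (-1 : ℝ)) (fun _ => 1) i else 0)
    (J : V →ₗ[ℝ] V)
    (hJT : ∀ i : Fin t, J (b (Sum.inl i)) = b (Sum.inr i))
    (hJS : ∀ i : Fin t, J (b (Sum.inr i)) = b (Sum.inl i)) :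
    (∀ x y : V, g (J x) y = - g x (J y)) ∧
    J ∘ₗ J = LinearMap.id ∧
    ∀ μ : ℝ, μ ≠ 0 →
      ∀ R : V → V → V → V → ℝ,
        (∀ X Y Z W, R X Y Z W = 3 * μ * R0 g X Y Z W - μ * RJ g J X Y Z W) →
        ∀ Jac : V → V →ₗ[ℝ] V, (∀ X Y Z, g (Jac X Y) Z = R Y X X Z) →
          ¬ (∀ X Y : V, X ≠ 0 →
              (∃ lam : ℝ, Module.End.HasEigenvector (Jac X) lam Y) →
              ∃ lam : ℝ, Module.End.HasEigenvector (Jac Y) lam X) := by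
  have hskew := skewAdjoint_of_basis_swap hb hJT hJS
  refine ⟨hskew, comp_self_eq_id_of_basis_swap hJT hJS, ?_⟩
  intro μ hμ R hR Jac hJac hdual
  replace hJac : ∀ X Y Z, g (Jac X Y) Z = 3 * μ * R0 g Y X X Z - μ * RJ g J Y X X Z :=
    fun X Y Z => (hJac X Y Z).trans (hR ..)
  let i₁ : Fin t := ⟨0, by omega⟩
  let i₂ : Fin t := ⟨1, by omega⟩
  have hi : i₁ ≠ i₂ := by simp [i₁, i₂, Fin.ext_iff]
  set X := b (Sum.inl i₁) + b (Sum.inr i₁)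
  set Y := b (Sum.inl i₁) + b (Sum.inr i₂)
  have hJacX : Jac X = 0 := antiClifford_jacobi_eq_zero hsymm hnd hskew hJac
    (by simp [X, hJT, hJS, add_comm]) (by simp [X, hb])
  have hX : X ≠ 0 := fun h => by simpa [X, hb] using congrArg (g · (b (Sum.inl i₁))) h
  have hY : Y ≠ 0 := fun h => by simpa [Y, hb, hi] using congrArg (g · (b (Sum.inl i₁))) h
  obtain ⟨lam, hlam⟩ := hdual X Y hX ⟨0, End.hasEigenvector_iff.mpr
    ⟨End.mem_eigenspace_iff.mpr (by simp [hJacX]), hY⟩⟩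
  have hT₂ := congrArg (g · (b (Sum.inl i₂))) hlam.apply_eq_smul
  simp [antiClifford_jacobi_eq hsymm hnd hskew hJac, X, Y, hb, hi, hi.symm, hJT, hJS] at hT₂
  exact hμ hT₂

/-- the `m = 1` anti-Clifford example. On a scalar product space of
neutral signature and dimension `2t ≥ 4`, with orthonormal basis
`T₁, …, T_t` (timelike) and `S₁, …, S_t` (spacelike), the product structure `J` given by
`JTᵢ = Sᵢ`, `JSᵢ = Tᵢ` is `g`-skew-adjoint with `J² = id`, and for every `μ ≠ 0` the
anti-Clifford curvature tensor `R = 3μ R⁰ − μ R^J` is not totally Jacobi-dual. -/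
theorem product_structure_not_totally_jacobiDual
    {V : Type*} [AddCommGroup V] [Module ℝ V] [FiniteDimensional ℝ V]
    (g : LinearMap.BilinForm ℝ V) (hsymm : ∀ x y, g x y = g y x) (hnd : g.Nondegenerate)
    (t : ℕ) (ht : 2 ≤ t) (b : Basis (Fin t ⊕ Fin t) ℝ V)
    (hb : ∀ i j, g (b i) (b j)
      = if i = j then Sum.elim (fun _ => (-1 : ℝ)) (fun _ => 1) i else 0)
    (J : V →ₗ[ℝ] V)
    (hJT : ∀ i : Fin t, J (b (Sum.inl i)) = b (Sum.inr i))
    (hJS : ∀ i : Fin t, J (b (Sum.inr i)) = b (Sum.inl i)) :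
    (∀ x y : V, g (J x) y = - g x (J y)) ∧
    J ∘ₗ J = LinearMap.id ∧
    ∀ μ : ℝ, μ ≠ 0 →
      ∀ R : V → V → V → V → ℝ,
        (∀ X Y Z W, R X Y Z W = 3 * μ * R0 g X Y Z W - μ * RJ g J X Y Z W) →
        ∀ Jac : V → V →ₗ[ℝ] V, (∀ X Y Z, g (Jac X Y) Z = R Y X X Z) →
          ¬ (∀ X Y : V, X ≠ 0 →
              (∃ lam : ℝ, Module.End.HasEigenvector (Jac X) lam Y) →
              ∃ lam : ℝ, Module.End.HasEigenvector (Jac Y) lam X) :=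
  product_structure_not_totally_jacobiDual_general g hsymm hnd t ht b hb J hJT hJS
end
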